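/- Reading the transposition labels of a maximal chain of NC_n from bottom to top gives a factorization of the n-cycle (1, 2, …, n) as a product of n − 1 transpositions, and this correspondence is a bijection between the maximal chains σ_0 ⋖ σ_1 ⋖ ⋯ ⋖ σ_{n−1} of NC_n (with labels t_i = π(σ_{i−1})⁻¹π(σ_i)) and the factorizations of (1, 2, …, n) as an ordered product of n − 1 transpositions. -/

import Mathlib

/-- A partition of `[n]` (encoded as an equivalence relation / setoid on `Fin n`)
is *noncrossing* if there are no elements `a < b < c < d` with `a` and `c` in one
block and `b` and `d` in a different block. -/
def IsNoncrossing {n : ℕ} (σ : Setoid (Fin n)) : Prop :=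
  ∀ a b c d : Fin n, a < b → b < c → c < d → σ a c → σ b d → σ a b

/-- The noncrossing partition lattice `NC_n`, ordered by refinement. -/
abbrev NC (n : ℕ) := {σ : Setoid (Fin n) // IsNoncrossing σ}

/-- The discrete partition (every block a singleton), as an element of `NC_n`. -/
def discNC (n : ℕ) : NC n :=
  ⟨⟨Eq, eq_equivalence⟩, by
    intro a b c d hab hbc hcd hac _
    exact absurd hac (ne_of_lt (hab.trans hbc))⟩

/-- The partition with the single block `[n]`, as an element of `NC_n`. -/
def fullNC (n : ℕ) : NC n :=
  ⟨⟨fun _ _ => True, ⟨fun _ => trivial, fun _ => trivial, fun _ _ => trivial⟩⟩,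
    fun _ _ _ _ _ _ _ _ _ => trivial⟩

/-- `p` is the permutation `π(σ)` associated to the partition `σ`: each block of `σ`
is a cycle of `p`, cycled in increasing order. -/
def IsPiPerm {n : ℕ} (σ : Setoid (Fin n)) (p : Equiv.Perm (Fin n)) : Prop :=
  ∀ x : Fin n,
    σ x (p x) ∧
    ((∃ y, σ x y ∧ x < y) → (x < p x ∧ ∀ y, σ x y → x < y → p x ≤ y)) ∧
    ((∀ y, σ x y → y ≤ x) → ∀ y, σ x y → p x ≤ y)

/-!
A cover `μ ⋖ ν` in `NC_n` cuts one block of `ν` into its elements in `(u, v]` and the rest, for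
some `u < v` in that block, and then `π(μ) = π(ν) · (u v)`. So the labels of a maximal chain are
transpositions, and they telescope to `π(1̂) = (1 2 … n)`. Conversely, multiplying by a
transposition changes the number of cycles by at most one, so the prefix products `P_i` of a
factorization of the `n`-cycle into `n - 1` transpositions have exactly `n - i` cycles. Hence,
going down from `P_{n-1} = π(1̂)`, each step multiplies by a transposition of two points in one
cycle of `P_{i+1}`, which is the cut of a block of the corresponding noncrossing partition: every
`P_i` is some `π(σ_i)`, and the `σ_i` form a maximal chain. It is the only one, since a partition
is recovered from `π(σ)` as its cycle partition.
-/

open Equiv Equiv.Perm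

namespace Setoid

variable {α : Type*} [LinearOrder α] {σ τ : Setoid α} {u v x y z : α}

/-- `y` is the cyclic successor of `x` in its block: the next larger element, or the least one
if `x` is the largest. -/
def IsBlockSucc (σ : Setoid α) (x y : α) : Prop :=
  σ x y ∧ ((∃ z, σ x z ∧ x < z) → x < y ∧ ∀ z, σ x z → x < z → y ≤ z) ∧
    ((∀ z, σ x z → z ≤ x) → ∀ z, σ x z → y ≤ z)

theorem IsBlockSucc.lt_and_le (h : σ.IsBlockSucc x y) (hz : σ x z) (hxz : x < z) :
    x < y ∧ y ≤ z :=
  ⟨(h.2.1 ⟨z, hz, hxz⟩).1, (h.2.1 ⟨z, hz, hxz⟩).2 z hz hxz⟩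

theorem IsBlockSucc.unique (h : σ.IsBlockSucc x y) (h' : σ.IsBlockSucc x z) : y = z := by
  by_cases hx : ∃ w, σ x w ∧ x < w
  · exact le_antisymm ((h.2.1 hx).2 z h'.1 (h'.2.1 hx).1) ((h'.2.1 hx).2 y h.1 (h.2.1 hx).1)
  · push Not at hx
    exact le_antisymm (h.2.2 hx z h'.1) (h'.2.2 hx y h.1)

theorem IsBlockSucc.mono (hle : τ ≤ σ) (hxy : τ x y) (h : σ.IsBlockSucc x y) :
    τ.IsBlockSucc x y := by
  refine ⟨hxy, fun ⟨z, hz, hxz⟩ => ?_, fun hmax z hz => ?_⟩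
  · exact ⟨(h.lt_and_le (hle hz) hxz).1, fun w hw hxw => (h.lt_and_le (hle hw) hxw).2⟩
  · by_cases hx : ∃ w, σ x w ∧ x < w
    · exact absurd (hmax y hxy) (not_le.2 (h.2.1 hx).1)
    · push Not at hx
      exact h.2.2 hx z (hle hz)

def splitPart (σ : Setoid α) (u v x : α) : Prop := σ u x ∧ u < x ∧ x ≤ v

/-- The block of `u` is cut into its part in `(u, v]` and the rest. -/
def split (σ : Setoid α) (u v : α) : Setoid α := σ ⊓ ker (σ.splitPart u v)

theorem split_rel :
    σ.split u v x y ↔ σ x y ∧ (σ.splitPart u v x ↔ σ.splitPart u v y) := by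
  rw [split, inf_iff_and, ker_def, eq_iff_iff]

theorem split_le : σ.split u v ≤ σ := inf_le_left

theorem splitPart_right (huv : u < v) (hσ : σ u v) : σ.splitPart u v v := ⟨hσ, huv, le_rfl⟩

theorem not_splitPart_left : ¬ σ.splitPart u v u := fun h => h.2.1.false

theorem split_left_iff : σ.split u v u x ↔ σ u x ∧ ¬ σ.splitPart u v x := by
  rw [split_rel, iff_false_left not_splitPart_left]

theorem split_or_of_rel (huv : u < v) (hσ : σ u v) (hxy : σ x y) :
    σ.split u v x y ∨ (σ.split u v x u ∧ σ.split u v v y) ∨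
      (σ.split u v x v ∧ σ.split u v u y) := by
  have hv := splitPart_right huv hσ
  by_cases hx : σ.splitPart u v x <;> by_cases hy : σ.splitPart u v y
  · exact .inl (split_rel.2 ⟨hxy, iff_of_true hx hy⟩)
  · exact .inr <| .inr ⟨split_rel.2 ⟨σ.trans (σ.symm hx.1) hσ, iff_of_true hx hv⟩,
      split_left_iff.2 ⟨σ.trans hx.1 hxy, hy⟩⟩
  · exact .inr <| .inl ⟨(σ.split u v).symm (split_left_iff.2 ⟨σ.trans hy.1 (σ.symm hxy), hx⟩),
      split_rel.2 ⟨σ.trans (σ.symm hσ) hy.1, iff_of_true hv hy⟩⟩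
  · exact .inl (split_rel.2 ⟨hxy, iff_of_false hx hy⟩)

theorem split_covBy (huv : u < v) (hσ : σ u v) : σ.split u v ⋖ σ := by
  have hne : ¬ σ.split u v u v := fun h => (split_left_iff.1 h).2 (splitPart_right huv hσ)
  refine ⟨lt_of_le_of_ne split_le fun h => hne (by rwa [h]), fun ρ hlt hgt => ?_⟩
  have hρ : ∀ {x y}, σ.split u v x y → ρ x y := fun h => hlt.le h
  by_cases hρuv : ρ u v
  · refine hgt.not_ge fun x y hxy => ?_
    rcases split_or_of_rel huv hσ hxy with h | ⟨h₁, h₂⟩ | ⟨h₁, h₂⟩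
    · exact hρ h
    · exact ρ.trans (hρ h₁) (ρ.trans hρuv (hρ h₂))
    · exact ρ.trans (hρ h₁) (ρ.trans (ρ.symm hρuv) (hρ h₂))
  · refine hlt.not_ge fun x y hxy => ?_
    rcases split_or_of_rel huv hσ (hgt.le hxy) with h | ⟨h₁, h₂⟩ | ⟨h₁, h₂⟩
    · exact h
    · exact absurd (ρ.trans (ρ.symm (hρ h₁)) (ρ.trans hxy (ρ.symm (hρ h₂)))) hρuv
    · exact absurd (ρ.trans (hρ h₂) (ρ.trans (ρ.symm hxy) (hρ h₁))) hρuv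

theorem IsBlockSucc.splitPart_iff (h : σ.IsBlockSucc x y) (hxu : x ≠ u) (hxv : x ≠ v)
    (hσ : σ u v) : σ.splitPart u v y ↔ σ.splitPart u v x := by
  by_cases hux : σ u x
  · have huy := σ.trans hux h.1
    rcases lt_trichotomy x u with hxu' | rfl | hux'
    · have hyu := (h.lt_and_le (σ.symm hux) hxu').2
      exact iff_of_false (fun hy => hyu.not_gt hy.2.1) (fun hx => hxu'.not_gt hx.2.1)
    · exact absurd rfl hxu
    rcases lt_or_gt_of_ne hxv with hxv' | hvx
    · obtain ⟨hxy, hyv⟩ := h.lt_and_le (σ.trans (σ.symm hux) hσ) hxv'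
      exact iff_of_true ⟨huy, hux'.trans hxy, hyv⟩ ⟨hux, hux', hxv'.le⟩
    refine iff_of_false (fun hy => ?_) (fun hx => hvx.not_ge hx.2.2)
    by_cases hbig : ∃ z, σ x z ∧ x < z
    · exact (hvx.trans (h.2.1 hbig).1).not_ge hy.2.2
    · push Not at hbig
      exact (h.2.2 hbig u (σ.symm hux)).not_gt hy.2.1
  · exact iff_of_false (fun hy => hux (σ.trans hy.1 (σ.symm h.1))) (fun hx => hux hx.1)

theorem IsBlockSucc.split_of_ne (h : σ.IsBlockSucc x y) (hxu : x ≠ u) (hxv : x ≠ v)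
    (hσ : σ u v) : (σ.split u v).IsBlockSucc x y :=
  h.mono split_le (split_rel.2 ⟨h.1, (h.splitPart_iff hxu hxv hσ).symm⟩)

theorem IsBlockSucc.split_right (hu : σ.IsBlockSucc u y) (huv : u < v) (hσ : σ u v) :
    (σ.split u v).IsBlockSucc v y := by
  obtain ⟨huy, hyv⟩ := hu.lt_and_le hσ huv
  have hv := splitPart_right huv hσ
  have hpart : ∀ {z}, σ.split u v v z → σ.splitPart u v z := fun hz => (split_rel.1 hz).2.1 hv
  refine ⟨split_rel.2 ⟨σ.trans (σ.symm hσ) hu.1, iff_of_true hv ⟨hu.1, huy, hyv⟩⟩,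
    fun ⟨z, hz, hvz⟩ => absurd (hpart hz).2.2 hvz.not_ge, fun _ z hz => ?_⟩
  exact (hu.lt_and_le (hpart hz).1 (hpart hz).2.1).2

theorem IsBlockSucc.split_left (hv : σ.IsBlockSucc v y) (huv : u < v) (hσ : σ u v) :
    (σ.split u v).IsBlockSucc u y := by
  have huy := σ.trans hσ hv.1
  by_cases hbig : ∃ z, σ v z ∧ v < z
  · obtain ⟨hvy, hmin⟩ := hv.2.1 hbig
    have huy' : σ.split u v u y := split_left_iff.2 ⟨huy, fun hy => hvy.not_ge hy.2.2⟩
    refine ⟨huy', fun _ => ⟨huv.trans hvy, fun z hz huz => ?_⟩,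
      fun hmax => absurd (hmax y huy') (huv.trans hvy).not_ge⟩
    obtain ⟨huz', hnz⟩ := split_left_iff.1 hz
    exact hmin z (σ.trans (σ.symm hσ) huz') (lt_of_not_ge fun hzv => hnz ⟨huz', huz, hzv⟩)
  · push Not at hbig
    have hyu := hv.2.2 hbig u (σ.symm hσ)
    refine ⟨split_left_iff.2 ⟨huy, fun hy => hyu.not_gt hy.2.1⟩, fun ⟨z, hz, huz⟩ => ?_,
      fun _ z hz => hv.2.2 hbig z (σ.trans (σ.symm hσ) (split_left_iff.1 hz).1)⟩
    obtain ⟨huz', hnz⟩ := split_left_iff.1 hz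
    exact absurd (hbig z (σ.trans (σ.symm hσ) huz')) fun hzv => hnz ⟨huz', huz, hzv⟩

theorem exists_bounds_of_rel [Finite α] (μ : Setoid α) (z : α) :
    ∃ a b, μ z a ∧ μ z b ∧ ∀ w, μ z w → a ≤ w ∧ w ≤ b := by
  obtain ⟨a, ha, hamin⟩ := Set.exists_min_image {w | μ z w} id (Set.toFinite _) ⟨z, μ.refl z⟩
  obtain ⟨b, hb, hbmax⟩ := Set.exists_max_image {w | μ z w} id (Set.toFinite _) ⟨z, μ.refl z⟩
  exact ⟨a, b, ha, hb, fun w hw => ⟨hamin w hw, hbmax w hw⟩⟩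

end Setoid

open Setoid

theorem Equiv.Perm.SameCycle.rel_of_forall_rel_apply {α : Type*} {f : Perm α} (r : Setoid α)
    (h : ∀ x, r x (f x)) {x y : α} (hxy : f.SameCycle x y) : r x y := by
  obtain ⟨i, rfl⟩ := hxy
  induction i using Int.induction_on generalizing x with
  | zero => exact r.refl x
  | succ i ih =>
    rw [zpow_add_one, mul_apply]
    exact r.trans (h x) ih
  | pred i ih =>
    rw [zpow_sub_one, mul_apply]
    exact r.trans (r.symm (by simpa using h (f⁻¹ x))) ih

section IsPiPerm

variable {n : ℕ} {σ τ : Setoid (Fin n)} {p q : Perm (Fin n)}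

theorem isPiPerm_iff : IsPiPerm σ p ↔ ∀ x, σ.IsBlockSucc x (p x) := Iff.rfl

theorem IsPiPerm.unique (hp : IsPiPerm σ p) (hq : IsPiPerm σ q) : p = q :=
  Equiv.ext fun x => (isPiPerm_iff.1 hp x).unique (isPiPerm_iff.1 hq x)

theorem IsPiPerm.sameCycle_of_rel_of_lt (hp : IsPiPerm σ p) {y z : Fin n} (hyz : σ y z)
    (hlt : y < z) : p.SameCycle y z := by
  induction y using WellFoundedGT.induction with
  | _ y ih =>
    obtain ⟨hy, hyz'⟩ := (isPiPerm_iff.1 hp y).lt_and_le hyz hlt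
    rcases hyz'.eq_or_lt with heq | hlt'
    · exact heq ▸ sameCycle_apply_right.2 (SameCycle.refl p y)
    · exact sameCycle_apply_left.1 (ih _ hy (σ.trans (σ.symm (hp y).1) hyz) hlt')

theorem IsPiPerm.rel_iff_sameCycle (hp : IsPiPerm σ p) {x y : Fin n} :
    σ x y ↔ p.SameCycle x y := by
  refine ⟨fun h => ?_, SameCycle.rel_of_forall_rel_apply σ fun x => (hp x).1⟩
  rcases lt_trichotomy x y with hlt | rfl | hgt
  · exact hp.sameCycle_of_rel_of_lt h hlt
  · exact SameCycle.refl p x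
  · exact (hp.sameCycle_of_rel_of_lt (σ.symm h) hgt).symm

theorem IsPiPerm.setoid_eq (hσ : IsPiPerm σ p) (hτ : IsPiPerm τ p) : σ = τ :=
  Setoid.ext fun _ _ => hσ.rel_iff_sameCycle.trans hτ.rel_iff_sameCycle.symm

theorem IsPiPerm.split (hp : IsPiPerm σ p) {u v : Fin n} (huv : u < v) (hσ : σ u v) :
    IsPiPerm (σ.split u v) (p * swap u v) := by
  rw [isPiPerm_iff] at hp ⊢
  intro x
  rcases eq_or_ne x u with rfl | hxu
  · simpa using (hp v).split_left huv hσ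
  rcases eq_or_ne x v with rfl | hxv
  · simpa using (hp u).split_right huv hσ
  rw [mul_apply, swap_apply_of_ne_of_ne hxu hxv]
  exact (hp x).split_of_ne hxu hxv hσ

theorem isPiPerm_discNC : IsPiPerm (discNC n).val 1 :=
  fun _ => ⟨rfl, fun ⟨_, hy, hlt⟩ => absurd hy hlt.ne, fun _ _ hy => hy ▸ le_rfl⟩

theorem isPiPerm_fullNC : IsPiPerm (fullNC n).val (finRotate n) := by
  intro x
  match n, x with
  | m + 1, x =>
  refine ⟨trivial, fun ⟨y, _, hxy⟩ => ?_, fun hmax y _ => ?_⟩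
  · have hval : (x + 1).val = x.val + 1 := Fin.val_add_one_of_lt (hxy.trans_le (Fin.le_last y))
    rw [finRotate_apply, Fin.lt_def, hval]
    exact ⟨Nat.lt_succ_self _, fun z _ hxz => by rw [Fin.le_def, hval]; exact hxz⟩
  · rw [le_antisymm (Fin.le_last x) (hmax (Fin.last m) trivial), finRotate_last]
    exact Fin.zero_le y

end IsPiPerm

section Noncrossing

variable {n : ℕ} {μ ν : Setoid (Fin n)}

theorem IsNoncrossing.split (hν : IsNoncrossing ν) {u v : Fin n} :
    IsNoncrossing (ν.split u v) := by
  intro a b c d hab hbc hcd hac hbd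
  obtain ⟨hac', hacPart⟩ := split_rel.1 hac
  obtain ⟨hbd', hbdPart⟩ := split_rel.1 hbd
  have hab' : ν a b := hν a b c d hab hbc hcd hac' hbd'
  refine split_rel.2 ⟨hab', ⟨fun ⟨hua, hult, hav⟩ => ?_, fun ⟨hub, hult, hbv⟩ => ?_⟩⟩
  · exact ⟨ν.trans hua hab', hult.trans hab, hbc.le.trans (hacPart.1 ⟨hua, hult, hav⟩).2.2⟩
  by_contra ha
  have hd := hbdPart.1 ⟨hub, hult, hbv⟩
  have hc : ¬ ν.splitPart u v c := fun h => ha (hacPart.2 h)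
  have hau : a ≤ u := not_lt.1 fun hua => ha ⟨ν.trans hub (ν.symm hab'), hua, hab.le.trans hbv⟩
  refine hc ⟨?_, hult.trans hbc, hcd.le.trans hd.2.2⟩
  rcases hau.eq_or_lt with rfl | hau
  · exact hac'
  · -- `a < u < c < d` with `a ~ c` and `u ~ d` forces `a ~ u`
    exact ν.trans (ν.symm (hν a u c d hau (hult.trans hbc) hcd hac' (ν.trans hub hbd'))) hac'

theorem IsNoncrossing.lt_and_lt_of_rel (hμ : IsNoncrossing μ) {a b w w' : Fin n} (hab : μ a b)
    (haw : a < w) (hwb : w < b) (hnaw : ¬ μ a w) (hw : μ w w') : a < w' ∧ w' < b := by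
  refine ⟨lt_of_le_of_ne (not_lt.1 fun h => hnaw ?_) fun h => hnaw ?_,
    lt_of_le_of_ne (not_lt.1 fun h => hnaw ?_) fun h => hnaw ?_⟩
  · exact μ.trans (μ.symm (hμ w' a w b h haw hwb (μ.symm hw) hab)) (μ.symm hw)
  · exact μ.symm (h ▸ hw)
  · exact hμ a w b w' haw hwb h hab hw
  · exact μ.trans hab (μ.symm (h ▸ hw))

/-- Take a block of minimal span: an element of the `ν`-block in between its ends would, by
noncrossing, lie in a `μ`-block nested strictly inside it. -/
theorem IsNoncrossing.exists_convex_block (hμ : IsNoncrossing μ) (hle : μ ≤ ν) {m z : Fin n}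
    (hm : ∀ w, ν m w → m ≤ w) (hmz : ν m z) (hz : ¬ μ m z) :
    ∃ a b, ν m a ∧ m < a ∧ μ a b ∧ (∀ w, μ a w → a ≤ w ∧ w ≤ b) ∧
      ∀ w, ν m w → a ≤ w → w ≤ b → μ a w := by
  let S := {ab : Fin n × Fin n | ν m ab.1 ∧ ¬ μ m ab.1 ∧ μ ab.1 ab.2 ∧
    ∀ w, μ ab.1 w → ab.1 ≤ w ∧ w ≤ ab.2}
  have hS : S.Nonempty := by
    obtain ⟨a, b, ha, hb, hab⟩ := μ.exists_bounds_of_rel z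
    exact ⟨(a, b), ν.trans hmz (hle ha), fun h => hz (μ.trans h (μ.symm ha)),
      μ.trans (μ.symm ha) hb, fun w hw => hab w (μ.trans ha hw)⟩
  obtain ⟨⟨a, b⟩, ⟨hma, hnma, hab, hbounds⟩, hmin⟩ :=
    S.exists_min_image (fun ab => ab.2.val - ab.1.val) (Set.toFinite _) hS
  refine ⟨a, b, hma, lt_of_le_of_ne (hm a hma) fun h => hnma (h ▸ μ.refl m), hab, hbounds,
    fun w hmw haw hwb => ?_⟩
  by_contra hnaw
  have haw' : a < w := lt_of_le_of_ne haw fun h => hnaw (h ▸ μ.refl a)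
  have hwb' : w < b := lt_of_le_of_ne hwb fun h => hnaw (h ▸ hab)
  have hnest := fun w' (hw' : μ w w') => hμ.lt_and_lt_of_rel hab haw' hwb' hnaw hw'
  obtain ⟨a', b', ha', hb', hbounds'⟩ := μ.exists_bounds_of_rel w
  have hmem : (a', b') ∈ S := ⟨ν.trans hmw (hle ha'),
    fun h => (hm a hma).not_gt (hnest m (μ.trans ha' (μ.symm h))).1,
    μ.trans (μ.symm ha') hb', fun w' hw' => hbounds' w' (μ.trans ha' hw')⟩
  have h₁ : a < a' ∧ a' < b := hnest a' ha'
  have h₂ : a < b' ∧ b' < b := hnest b' hb'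
  have := hmin _ hmem
  simp only at this
  omega

end Noncrossing

namespace NC

variable {n : ℕ} {μ ν : NC n} {p q : Perm (Fin n)} {u v : Fin n}

theorem eq_of_isPiPerm (hμ : IsPiPerm μ.val p) (hν : IsPiPerm ν.val p) : μ = ν :=
  Subtype.ext (hμ.setoid_eq hν)

theorem split_covBy (ν : NC n) (huv : u < v) (hν : ν.val u v) :
    (⟨ν.val.split u v, ν.prop.split⟩ : NC n) ⋖ ν :=
  CovBy.of_image (OrderEmbedding.subtype _) (Setoid.split_covBy huv hν)

theorem exists_split_of_covBy (h : μ ⋖ ν) :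
    ∃ u v, u < v ∧ ν.val u v ∧ μ.val = ν.val.split u v := by
  have hle : μ.val ≤ ν.val := h.le
  obtain ⟨x, y, hxy, hnxy⟩ : ∃ x y, ν.val x y ∧ ¬ μ.val x y := by
    by_contra! hcon
    exact h.lt.ne (Subtype.ext (le_antisymm hle fun x y => hcon x y))
  obtain ⟨m, _, hxm, _, hνbounds⟩ := ν.val.exists_bounds_of_rel x
  have hm : ∀ w, ν.val m w → m ≤ w := fun w hw => (hνbounds w (ν.val.trans hxm hw)).1
  obtain ⟨z, hmz, hz⟩ : ∃ z, ν.val m z ∧ ¬ μ.val m z := by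
    by_cases hmx : μ.val m x
    · exact ⟨y, ν.val.trans (ν.val.symm hxm) hxy,
        fun hmy => hnxy (μ.val.trans (μ.val.symm hmx) hmy)⟩
    · exact ⟨x, ν.val.symm hxm, hmx⟩
  obtain ⟨a, b, hma, hma', hab, hbounds, hconvex⟩ := μ.prop.exists_convex_block hle hm hmz hz
  -- `u` is the element of the `ν`-block just before the `μ`-block `[a, b]`
  obtain ⟨u, ⟨hmu, hua⟩, hu⟩ :=
    Set.exists_max_image {w | ν.val m w ∧ w < a} id (Set.toFinite _) ⟨m, ν.val.refl m, hma'⟩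
  have hpart : ∀ w, ν.val.splitPart u b w ↔ μ.val b w := fun w => by
    refine ⟨fun ⟨huw, hlt, hwb⟩ => ?_, fun hbw => ?_⟩
    · have hmw := ν.val.trans hmu huw
      have haw : a ≤ w := not_lt.1 fun hwa => (hu w ⟨hmw, hwa⟩).not_gt hlt
      exact μ.val.trans (μ.val.symm hab) (hconvex w hmw haw hwb)
    · have haw := μ.val.trans hab hbw
      exact ⟨ν.val.trans (ν.val.symm hmu) (ν.val.trans hma (hle haw)),
        hua.trans_le (hbounds w haw).1, (hbounds w haw).2⟩
  have hub : u < b := hua.trans_le (hbounds b hab).1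
  have hνub : ν.val u b := ν.val.trans (ν.val.symm hmu) (ν.val.trans hma (hle hab))
  have hμ : μ ≤ ⟨ν.val.split u b, ν.prop.split⟩ := fun x y hxy => split_rel.2 ⟨hle hxy,
    (hpart x).trans <| Iff.trans ⟨fun h => μ.val.trans h hxy,
      fun h => μ.val.trans h (μ.val.symm hxy)⟩ (hpart y).symm⟩
  exact ⟨u, b, hub, hνub, congrArg Subtype.val
    (hμ.eq_of_not_lt fun hlt => h.2 hlt (split_covBy ν hub hνub).lt)⟩

theorem isSwap_inv_mul_of_covBy (hμ : IsPiPerm μ.val p) (hν : IsPiPerm ν.val q) (h : μ ⋖ ν) :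
    (p⁻¹ * q).IsSwap := by
  obtain ⟨u, v, huv, hνuv, hsplit⟩ := exists_split_of_covBy h
  have hp : p = q * swap u v := hμ.unique (hsplit ▸ hν.split huv hνuv)
  exact ⟨u, v, huv.ne, by rw [hp, mul_inv_rev, swap_inv, mul_assoc, inv_mul_cancel, mul_one]⟩

theorem exists_covBy_isPiPerm (hν : IsPiPerm ν.val q) (huv : u < v) (hq : q.SameCycle u v) :
    ∃ μ : NC n, μ ⋖ ν ∧ IsPiPerm μ.val (q * swap u v) :=
  have hνuv := hν.rel_iff_sameCycle.2 hq
  ⟨_, split_covBy ν huv hνuv, hν.split huv hνuv⟩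

end NC

namespace Equiv.Perm

variable {α : Type*} {f : Perm α} {u v : α}

noncomputable def numCycles (f : Perm α) : ℕ := Nat.card (Quotient (SameCycle.setoid f))

theorem numCycles_one : (1 : Perm α).numCycles = Nat.card α :=
  (Nat.card_eq_of_bijective _ ⟨fun _ _ h => sameCycle_one.1 (Quotient.exact h),
    Quotient.mk_surjective⟩).symm

variable [Finite α]

theorem numCycles_le_of_sameCycle_imp {g : Perm α}
    (h : ∀ ⦃x y⦄, f.SameCycle x y → g.SameCycle x y) : g.numCycles ≤ f.numCycles :=
  Nat.card_le_card_of_surjective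
    (Quotient.lift (Quotient.mk (SameCycle.setoid g)) fun _ _ hxy => Quotient.sound (h hxy))
    (Quotient.ind fun x => ⟨Quotient.mk _ x, rfl⟩)

variable [DecidableEq α]

theorem numCycles_le_numCycles_mul_swap_add_one (f : Perm α) (u v : α) :
    f.numCycles ≤ (f * swap u v).numCycles + 1 := by
  classical
  let r := SameCycle.setoid f
  -- `g` is the quotient map of `r` with the cycles of `u` and `v` glued together
  let g : α → Quotient r := fun x => if f.SameCycle x v then Quotient.mk r u else Quotient.mk r x
  have hgr : ∀ ⦃x y⦄, f.SameCycle x y → g x = g y := fun x y hxy => by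
    have hv : f.SameCycle x v ↔ f.SameCycle y v := ⟨hxy.symm.trans, hxy.trans⟩
    simp only [g, hv, (Quotient.sound hxy : Quotient.mk r x = Quotient.mk r y)]
  have hg : ∀ ⦃x y⦄, (f * swap u v).SameCycle x y → g x = g y := fun _ _ hxy =>
    hxy.rel_of_forall_rel_apply (Setoid.ker g) fun x => by
      rw [ker_def, mul_apply]
      rcases eq_or_ne x u with rfl | hxu
      · rw [swap_apply_left, ← hgr (sameCycle_apply_right.2 .rfl)]
        simp [g, SameCycle.rfl]
      rcases eq_or_ne x v with rfl | hxv
      · rw [swap_apply_right, ← hgr (sameCycle_apply_right.2 .rfl)]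
        simp [g, SameCycle.rfl]
      · rw [swap_apply_of_ne_of_ne hxu hxv, ← hgr (sameCycle_apply_right.2 .rfl)]
  let F : Option (Quotient (SameCycle.setoid (f * swap u v))) → Quotient r :=
    fun o => o.elim (Quotient.mk r v) (Quotient.lift g hg)
  have hF : Function.Surjective F := by
    refine Quotient.ind fun x => ?_
    by_cases hx : f.SameCycle x v
    · exact ⟨none, Quotient.sound hx.symm⟩
    · exact ⟨some (Quotient.mk _ x), by simp [F, g, hx]⟩
  calc f.numCycles ≤ Nat.card (Option (Quotient (SameCycle.setoid (f * swap u v)))) :=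
        Nat.card_le_card_of_surjective F hF
    _ = (f * swap u v).numCycles + 1 := Finite.card_option

theorem sameCycle_mul_swap_apply_left (h : ¬ f.SameCycle u v) :
    (f * swap u v).SameCycle u (f u) := by
  classical
  have hex : ∃ k : ℕ, (f ^ k) (f u) = u := (sameCycle_apply_left.2 .rfl).exists_nat_pow_eq
  -- up to its first return to `u`, the `f`-orbit of `f u` avoids `u` and `v`
  have hagree : ∀ j ≤ Nat.find hex, ((f * swap u v) ^ j) (f u) = (f ^ j) (f u) := by
    intro j hj
    induction j with
    | zero => rfl
    | succ j ih =>
      have hne_u : (f ^ j) (f u) ≠ u := Nat.find_min hex (by omega)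
      have hne_v : (f ^ j) (f u) ≠ v := fun hv =>
        h (hv ▸ sameCycle_pow_right.2 (sameCycle_apply_right.2 .rfl))
      rw [pow_succ', mul_apply, ih (by omega), mul_apply, swap_apply_of_ne_of_ne hne_u hne_v,
        ← mul_apply, ← pow_succ']
  have := (sameCycle_pow_right (n := Nat.find hex)).2 (SameCycle.refl (f * swap u v) (f u))
  rw [hagree _ le_rfl, Nat.find_spec hex] at this
  exact this.symm

theorem numCycles_mul_swap_le (h : ¬ f.SameCycle u v) : (f * swap u v).numCycles ≤ f.numCycles :=
  numCycles_le_of_sameCycle_imp fun _ _ hxy =>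
    hxy.rel_of_forall_rel_apply (SameCycle.setoid (f * swap u v)) fun x => by
      rcases eq_or_ne x u with rfl | hxu
      · exact sameCycle_mul_swap_apply_left h
      rcases eq_or_ne x v with rfl | hxv
      · rw [swap_comm]
        exact sameCycle_mul_swap_apply_left fun h' => h h'.symm
      · have : (f * swap u v) x = f x := by rw [mul_apply, swap_apply_of_ne_of_ne hxu hxv]
        exact this ▸ sameCycle_apply_right.2 .rfl

theorem numCycles_le_numCycles_mul_prod_add_length {l : List (Perm α)}
    (hl : ∀ t ∈ l, t.IsSwap) (f : Perm α) : f.numCycles ≤ (f * l.prod).numCycles + l.length := by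
  induction l generalizing f with
  | nil => simp
  | cons t l ih =>
    obtain ⟨u, v, -, rfl⟩ := hl t List.mem_cons_self
    have h₁ := numCycles_le_numCycles_mul_swap_add_one f u v
    have h₂ := ih (fun t ht => hl t (List.mem_cons_of_mem _ ht)) (f * swap u v)
    rw [List.prod_cons, List.length_cons, ← mul_assoc]
    omega

theorem numCycles_take_prod_add {l : List (Perm α)} (hl : ∀ t ∈ l, t.IsSwap)
    (hmin : l.prod.numCycles + l.length ≤ Nat.card α) {i : ℕ} (hi : i ≤ l.length) :
    (l.take i).prod.numCycles + i = Nat.card α := by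
  have hlo := numCycles_le_numCycles_mul_prod_add_length (l := l.take i)
    (fun t ht => hl t (List.mem_of_mem_take ht)) 1
  have hhi := numCycles_le_numCycles_mul_prod_add_length (l := l.drop i)
    (fun t ht => hl t (List.mem_of_mem_drop ht)) (l.take i).prod
  rw [one_mul, numCycles_one, List.length_take] at hlo
  rw [← List.prod_append, List.take_append_drop, List.length_drop] at hhi
  omega

theorem sameCycle_take_succ_prod {l : List (Perm α)} (hl : ∀ t ∈ l, t.IsSwap)
    (hmin : l.prod.numCycles + l.length ≤ Nat.card α) {i : ℕ} (hi : i < l.length)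
    (ht : l[i] = swap u v) : (l.take (i + 1)).prod.SameCycle u v := by
  by_contra h
  have h₁ := numCycles_take_prod_add hl hmin hi.le
  have h₂ := numCycles_take_prod_add hl hmin hi
  have h₃ := numCycles_mul_swap_le h
  rw [List.prod_take_succ _ _ hi, ht] at h₂ h₃
  rw [mul_swap_mul_self] at h₃
  omega

end Equiv.Perm

theorem Equiv.Perm.IsSwap.exists_lt {α : Type*} [LinearOrder α] {t : Perm α} (h : t.IsSwap) :
    ∃ u v, u < v ∧ t = swap u v := by
  obtain ⟨a, b, hab, rfl⟩ := h
  rcases hab.lt_or_gt with h | h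
  · exact ⟨a, b, h, rfl⟩
  · exact ⟨b, a, h, swap_comm a b⟩

section Labels

variable {G : Type*} [Group G]

theorem prod_map_range_inv_mul (f : ℕ → G) (m : ℕ) :
    ((List.range m).map fun i => (f i)⁻¹ * f (i + 1)).prod = (f 0)⁻¹ * f m := by
  induction m with
  | zero => simp
  | succ m ih => simp [List.range_succ, ih, mul_assoc]

theorem map_range_inv_mul_eq_iff (f : ℕ → G) (hf : f 0 = 1) {l : List G} {m : ℕ} :
    ((List.range m).map fun i => (f i)⁻¹ * f (i + 1)) = l ↔
      l.length = m ∧ ∀ i ≤ m, f i = (l.take i).prod := by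
  constructor
  · rintro rfl
    refine ⟨by simp, fun i hi => ?_⟩
    rw [← List.map_take, List.take_range, min_eq_left hi, prod_map_range_inv_mul, hf, inv_one,
      one_mul]
  · rintro ⟨hlen, hfl⟩
    refine List.ext_getElem (by simp [hlen]) fun i h _ => ?_
    have hi : i < m := by simpa using h
    rw [List.getElem_map, List.getElem_range, hfl i hi.le, hfl (i + 1) hi,
      List.prod_take_succ _ _ (hlen ▸ hi), inv_mul_cancel_left]

end Labels

section Chain

variable {n : ℕ} {l : List (Perm (Fin n))}

theorem numCycles_finRotate_add_le : (finRotate n).numCycles + (n - 1) ≤ n := by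
  cases n with
  | zero => simp [numCycles]
  | succ n =>
    have : (finRotate (n + 1)).numCycles ≤ 1 := Finite.card_le_one_iff_subsingleton.2
      ⟨Quotient.ind₂ fun x y => Quotient.sound (isPiPerm_fullNC.rel_iff_sameCycle.1 trivial)⟩
    omega

theorem exists_sameCycle_swap_of_factorization (hl : ∀ t ∈ l, t.IsSwap) (hlen : l.length = n - 1)
    (hprod : l.prod = finRotate n) {i : ℕ} (hi : i < n - 1) :
    ∃ u v, u < v ∧ (l.take (i + 1)).prod.SameCycle u v ∧
      (l.take (i + 1)).prod * swap u v = (l.take i).prod := by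
  have hi' : i < l.length := hlen ▸ hi
  obtain ⟨u, v, huv, ht⟩ := (hl _ (List.getElem_mem hi')).exists_lt
  have hmin : l.prod.numCycles + l.length ≤ Nat.card (Fin n) := by
    rw [hprod, hlen, Nat.card_eq_fintype_card, Fintype.card_fin]
    exact numCycles_finRotate_add_le
  refine ⟨u, v, huv, sameCycle_take_succ_prod hl hmin hi' ht, ?_⟩
  rw [List.prod_take_succ _ _ hi', ht, mul_swap_mul_self]

theorem NC.exists_chain (hl : ∀ t ∈ l, t.IsSwap) (hlen : l.length = n - 1)
    (hprod : l.prod = finRotate n) :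
    ∃ c : ℕ → NC n, (∀ i ≤ n - 1, IsPiPerm (c i).val (l.take i).prod) ∧
      c 0 = discNC n ∧ c (n - 1) = fullNC n ∧ ∀ i < n - 1, c i ⋖ c (i + 1) := by
  have htop : (l.take (n - 1)).prod = finRotate n := by rw [← hlen, List.take_length, hprod]
  have hex : ∀ i ≤ n - 1, ∃ σ : NC n, IsPiPerm σ.val (l.take i).prod := by
    intro i hi
    induction hi using Nat.decreasingInduction with
    | self => exact ⟨fullNC n, htop ▸ isPiPerm_fullNC⟩
    | of_succ i hi ih =>
      obtain ⟨τ, hτ⟩ := ih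
      obtain ⟨u, v, huv, hsc, hstep⟩ := exists_sameCycle_swap_of_factorization hl hlen hprod hi
      obtain ⟨μ, -, hμ⟩ := NC.exists_covBy_isPiPerm hτ huv hsc
      exact ⟨μ, hstep ▸ hμ⟩
  have : Nonempty (NC n) := ⟨discNC n⟩
  choose! c hc using hex
  refine ⟨c, hc, NC.eq_of_isPiPerm (hc 0 (Nat.zero_le _)) isPiPerm_discNC,
    NC.eq_of_isPiPerm (hc _ le_rfl) (htop ▸ isPiPerm_fullNC), fun i hi => ?_⟩
  obtain ⟨u, v, huv, hsc, hstep⟩ := exists_sameCycle_swap_of_factorization hl hlen hprod hi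
  obtain ⟨μ, hcov, hμ⟩ := NC.exists_covBy_isPiPerm (hc (i + 1) hi) huv hsc
  rwa [NC.eq_of_isPiPerm (hc i hi.le) (hstep ▸ hμ)]

end Chain

theorem NC_maximal_chains_biject_with_factorizations_general (n : ℕ)
    (π : NC n → Equiv.Perm (Fin n)) (hπ : ∀ σ : NC n, IsPiPerm σ.val (π σ)) :
    (∀ c : ℕ → NC n, c 0 = discNC n → c (n - 1) = fullNC n →
      (∀ i < n - 1, c i ⋖ c (i + 1)) →
      (∀ t ∈ (List.range (n - 1)).map fun i => (π (c i))⁻¹ * π (c (i + 1)), t.IsSwap) ∧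
      ((List.range (n - 1)).map fun i => (π (c i))⁻¹ * π (c (i + 1))).length = n - 1 ∧
      ((List.range (n - 1)).map fun i => (π (c i))⁻¹ * π (c (i + 1))).prod
        = finRotate n) ∧
    (∀ l : List (Equiv.Perm (Fin n)), (∀ t ∈ l, t.IsSwap) → l.length = n - 1 →
      l.prod = finRotate n →
      ∃ c : ℕ → NC n,
        (c 0 = discNC n ∧ c (n - 1) = fullNC n ∧ (∀ i < n - 1, c i ⋖ c (i + 1)) ∧
          ((List.range (n - 1)).map fun i => (π (c i))⁻¹ * π (c (i + 1))) = l) ∧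
        ∀ c' : ℕ → NC n,
          (c' 0 = discNC n ∧ c' (n - 1) = fullNC n ∧ (∀ i < n - 1, c' i ⋖ c' (i + 1)) ∧
            ((List.range (n - 1)).map fun i => (π (c' i))⁻¹ * π (c' (i + 1))) = l) →
          ∀ i ≤ n - 1, c' i = c i) := by
  have hdisc : π (discNC n) = 1 := (hπ _).unique isPiPerm_discNC
  have hfull : π (fullNC n) = finRotate n := (hπ _).unique isPiPerm_fullNC
  refine ⟨fun c h0 hN hcov => ⟨?_, by simp, ?_⟩, fun l hl hlen hprod => ?_⟩
  · simp only [List.mem_map, List.mem_range]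
    rintro _ ⟨i, hi, rfl⟩
    exact NC.isSwap_inv_mul_of_covBy (hπ _) (hπ _) (hcov i hi)
  · rw [prod_map_range_inv_mul (fun i => π (c i)), h0, hN, hdisc, hfull, inv_one, one_mul]
  have hlabels : ∀ c : ℕ → NC n, c 0 = discNC n →
      (((List.range (n - 1)).map fun i => (π (c i))⁻¹ * π (c (i + 1))) = l ↔
        ∀ i ≤ n - 1, π (c i) = (l.take i).prod) := fun c h0 =>
    (map_range_inv_mul_eq_iff (fun i => π (c i)) (by rw [h0, hdisc])).trans (and_iff_right hlen)
  obtain ⟨c, hc, h0, hN, hcov⟩ := NC.exists_chain hl hlen hprod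
  refine ⟨c, ⟨h0, hN, hcov, (hlabels c h0).2 fun i hi => (hπ _).unique (hc i hi)⟩, ?_⟩
  rintro c' ⟨h0', -, -, hlabels'⟩ i hi
  exact NC.eq_of_isPiPerm ((hlabels c' h0').1 hlabels' i hi ▸ hπ (c' i)) (hc i hi)

/-- Reading the transposition labels `t_i = π(σ_{i-1})⁻¹ π(σ_i)` of a maximal chain
`σ_0 ⋖ σ_1 ⋖ ⋯ ⋖ σ_{n-1}` of `NC_n` (from bottom to top) gives a factorization of
the `n`-cycle `(1, 2, …, n)` (here `finRotate n`) as an ordered product of `n - 1`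
transpositions, and this correspondence is a bijection between the maximal chains of
`NC_n` and such factorizations: every factorization arises from exactly one maximal
chain. -/
theorem NC_maximal_chains_biject_with_factorizations (n : ℕ) (hn : 0 < n)
    (π : NC n → Equiv.Perm (Fin n)) (hπ : ∀ σ : NC n, IsPiPerm σ.val (π σ)) :
    (∀ c : ℕ → NC n, c 0 = discNC n → c (n - 1) = fullNC n →
      (∀ i < n - 1, c i ⋖ c (i + 1)) →
      (∀ t ∈ (List.range (n - 1)).map fun i => (π (c i))⁻¹ * π (c (i + 1)), t.IsSwap) ∧
      ((List.range (n - 1)).map fun i => (π (c i))⁻¹ * π (c (i + 1))).length = n - 1 ∧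
      ((List.range (n - 1)).map fun i => (π (c i))⁻¹ * π (c (i + 1))).prod
        = finRotate n) ∧
    (∀ l : List (Equiv.Perm (Fin n)), (∀ t ∈ l, t.IsSwap) → l.length = n - 1 →
      l.prod = finRotate n →
      ∃ c : ℕ → NC n,
        (c 0 = discNC n ∧ c (n - 1) = fullNC n ∧ (∀ i < n - 1, c i ⋖ c (i + 1)) ∧
          ((List.range (n - 1)).map fun i => (π (c i))⁻¹ * π (c (i + 1))) = l) ∧
        ∀ c' : ℕ → NC n,
          (c' 0 = discNC n ∧ c' (n - 1) = fullNC n ∧ (∀ i < n - 1, c' i ⋖ c' (i + 1)) ∧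
            ((List.range (n - 1)).map fun i => (π (c' i))⁻¹ * π (c' (i + 1))) = l) →
          ∀ i ≤ n - 1, c' i = c i) :=
  NC_maximal_chains_biject_with_factorizations_general n π hπ
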